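/- arXiv:2503.18190 — 4 statements merged into one kernel-verified Lean document; each statement's English description precedes it below -/
import Mathlib

section
/- For all real third-order tensors A ∈ ℝ^{m×l×n} and B ∈ ℝ^{l×p×n}, the block-circulant operator is multiplicative with respect to the t-product: bcirc(A∗B) = bcirc(A)·bcirc(B), where bcirc(A∗B) ∈ ℝ^{mn×pn}. -/
open scoped BigOperators
open Matrix

/-- A real third-order tensor of size `a × b × c` (zero-indexed). -/
abbrev Tensor (a b c : ℕ) := Fin a → Fin b → Fin c → ℝ

/-- The block-circulant matrix of a third-order tensor: the `(r, s)` block is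
the frontal slice of index `r - s (mod c)` (zero-indexed). -/
def bcirc {a b c : ℕ} (A : Tensor a b c) : Matrix (Fin c × Fin a) (Fin c × Fin b) ℝ :=
  fun ri sj => A ri.2 sj.2 (ri.1 - sj.1)

/-- Unfolding: stack the frontal slices of a tensor vertically into a matrix. -/
def unfoldT {a b c : ℕ} (X : Tensor a b c) : Matrix (Fin c × Fin a) (Fin b) ℝ :=
  fun ki j => X ki.2 j ki.1

/-- The t-product of two third-order tensors:
`A ∗ X = fold (bcirc A * unfold X)`. -/
noncomputable def tMul {a b c d : ℕ} (A : Tensor a b c) (X : Tensor b d c) : Tensor a d c :=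
  fun i j k => (bcirc A * unfoldT X) (k, i) j

/-- The block-circulant operator is multiplicative with respect to the
t-product: `bcirc (A ∗ B) = bcirc A * bcirc B`. -/
theorem bcirc_tprod {m l n p : ℕ} (A : Tensor m l n) (B : Tensor l p n) :
    bcirc (tMul A B) = bcirc A * bcirc B := by
  funext ki sj
  obtain ⟨k, i⟩ := ki
  obtain ⟨s, j⟩ := sj
  haveI : NeZero n := ⟨k.pos.ne'⟩
  simp only [bcirc, tMul, Matrix.mul_apply, unfoldT]
  exact Fintype.sum_equiv ((Equiv.addRight s).prodCongr (Equiv.refl (Fin l))) _ _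
    (fun ⟨t, b⟩ => by
      simp only [bcirc, Equiv.prodCongr_apply, Equiv.coe_addRight, Equiv.refl_apply, Prod.map,
        add_sub_cancel_right, sub_sub]
      rw [add_comm s t])
end

section
/- Let A ∈ ℝ^{m×l×n}, X⋆ ∈ ℝ^{l×p×n}, B⋆ = A∗X⋆, and B = B⋆ + B_corr ∈ ℝ^{m×p×n}, where the corruption set C = {(i,j,h) : (B_corr)_{ijh} ≠ 0} has size |C| = β·mpn. Let 0 < q < 1 − β and let X ∈ ℝ^{l×p×n} be arbitrary. Then the q-quantile of the residual tensor E = A∗X − B satisfies Q_q(E) ≤ (σ_max(bcirc(A)) / √(mpn(1−β−q))) · ‖X − X⋆‖_F. -/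
open scoped BigOperators
open Matrix

/-- Frobenius norm of a third-order tensor: the square root of the sum of
squares of all entries. -/
noncomputable def frob {a b c : ℕ} (X : Tensor a b c) : ℝ :=
  Real.sqrt (∑ i, ∑ j, ∑ k, (X i j k) ^ 2)

/-- The largest singular value of a real matrix: the square root of the largest
eigenvalue of the symmetric positive semidefinite matrix `Mᵀ * M`. -/
noncomputable def sigmaMax {ι κ : Type*} [Fintype ι] [Fintype κ] [DecidableEq κ]
    (M : Matrix ι κ ℝ) : ℝ :=
  Real.sqrt (⨆ i, ((by simpa using Matrix.isHermitian_conjTranspose_mul_self M) :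
    (Mᵀ * M).IsHermitian).eigenvalues i)

/-- The empirical `q`-quantile of the absolute values of the entries of a
third-order tensor: the `⌊q · abc⌋`-th smallest element (1-indexed) of the
multiset `{|E i j k|}`. -/
noncomputable def quantile {a b c : ℕ} (q : ℝ) (E : Tensor a b c) : ℝ :=
  (((Finset.univ : Finset (Fin a × Fin b × Fin c)).val.map
      (fun t => |E t.1 t.2.1 t.2.2|)).sort (· ≤ ·)).getD
    (⌊q * ((a * b * c : ℕ) : ℝ)⌋.toNat - 1) 0

/-!
Write `Y = X - X⋆`. Off the corruption set the residual `E = A ∗ X - B` agrees with the clean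
residual `A ∗ Y`. By the choice of the quantile, at least `(1 - q)·mpn` entries of `E` satisfy
`|E_t| ≥ Q_q(E)`, and at most `β·mpn` of them are corrupted, so at least `(1 - β - q)·mpn` entries
of `A ∗ Y` are that large. Hence `(1 - β - q)·mpn·Q_q(E)² ≤ ‖A ∗ Y‖_F² = ‖bcirc(A)·unfold(Y)‖_F²`,
and this is at most `σ_max(bcirc A)²·‖Y‖_F²` because `bcirc(A)ᵀ bcirc(A) ≤ σ_max(bcirc A)²·I` in
the Loewner order.
-/

open scoped MatrixOrder Finset

section SpectralBound

variable {ι κ ρ : Type*} [Fintype ι] [Fintype κ] [Fintype ρ] [DecidableEq κ]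

theorem sigmaMax_nonneg (M : Matrix ι κ ℝ) : 0 ≤ sigmaMax M :=
  Real.sqrt_nonneg _

theorem transpose_mul_self_le_sigmaMax_sq (M : Matrix ι κ ℝ) :
    Mᵀ * M ≤ algebraMap ℝ (Matrix κ κ ℝ) (sigmaMax M ^ 2) := by
  have hS : (Mᵀ * M).IsHermitian := by simpa using isHermitian_conjTranspose_mul_self M
  have hnonneg : ∀ j, 0 ≤ hS.eigenvalues j := by
    simpa using eigenvalues_conjTranspose_mul_self_nonneg M
  refine le_algebraMap_of_spectrum_le (fun r hr => ?_) hS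
  rw [hS.spectrum_real_eq_range_eigenvalues] at hr
  obtain ⟨j, rfl⟩ := hr
  rw [sigmaMax, Real.sq_sqrt (Real.iSup_nonneg hnonneg)]
  exact le_ciSup (Set.finite_range _).bddAbove j

theorem dotProduct_mulVec_self_le (M : Matrix ι κ ℝ) (v : κ → ℝ) :
    (M *ᵥ v) ⬝ᵥ (M *ᵥ v) ≤ sigmaMax M ^ 2 * (v ⬝ᵥ v) := by
  have h := (le_iff.mp (transpose_mul_self_le_sigmaMax_sq M)).dotProduct_mulVec_nonneg v
  rw [Algebra.algebraMap_eq_smul_one, sub_mulVec, smul_mulVec, one_mulVec, dotProduct_sub,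
    dotProduct_smul, ← mulVec_mulVec, dotProduct_mulVec, vecMul_transpose, sub_nonneg] at h
  simpa [dotProduct_comm v] using h

theorem sum_sq_mul_le (M : Matrix ι κ ℝ) (W : Matrix κ ρ ℝ) :
    ∑ i, ∑ j, (M * W) i j ^ 2 ≤ sigmaMax M ^ 2 * ∑ k, ∑ j, W k j ^ 2 := by
  have hcol (j : ρ) : ∑ i, (M * W) i j ^ 2 ≤ sigmaMax M ^ 2 * ∑ k, W k j ^ 2 := by
    simpa [dotProduct, sq, mul_apply, mulVec] using dotProduct_mulVec_self_le M (Wᵀ j)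
  rw [Finset.sum_comm, Finset.sum_comm (f := fun k j => W k j ^ 2), Finset.mul_sum]
  exact Finset.sum_le_sum fun j _ => hcol j

end SpectralBound

section Tensor

variable {a b c d : ℕ}

theorem frob_nonneg (X : Tensor a b c) : 0 ≤ frob X :=
  Real.sqrt_nonneg _

theorem sq_frob (X : Tensor a b c) : frob X ^ 2 = ∑ i, ∑ j, ∑ k, X i j k ^ 2 :=
  Real.sq_sqrt (by positivity)

theorem sq_frob_eq_sum_unfoldT (X : Tensor a b c) :
    frob X ^ 2 = ∑ ki, ∑ j, unfoldT X ki j ^ 2 := by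
  rw [sq_frob, Fintype.sum_prod_type, eq_comm, Finset.sum_comm]
  exact Finset.sum_congr rfl fun i _ => Finset.sum_comm

theorem sq_frob_eq_sum (X : Tensor a b c) :
    frob X ^ 2 = ∑ t : Fin a × Fin b × Fin c, X t.1 t.2.1 t.2.2 ^ 2 := by
  simp only [sq_frob, Fintype.sum_prod_type]

theorem unfoldT_tMul (A : Tensor a b c) (X : Tensor b d c) :
    unfoldT (tMul A X) = bcirc A * unfoldT X :=
  rfl

theorem tMul_sub (A : Tensor a b c) (X Y : Tensor b d c) :
    tMul A (X - Y) = tMul A X - tMul A Y := by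
  have h : unfoldT (X - Y) = unfoldT X - unfoldT Y := rfl
  ext i j k
  simp only [tMul, h, Matrix.mul_sub, Pi.sub_apply, Matrix.sub_apply]

theorem frob_tMul_le (A : Tensor a b c) (X : Tensor b d c) :
    frob (tMul A X) ≤ sigmaMax (bcirc A) * frob X := by
  refine le_of_pow_le_pow_left₀ two_ne_zero (mul_nonneg (sigmaMax_nonneg _) (frob_nonneg X)) ?_
  rw [mul_pow, sq_frob_eq_sum_unfoldT, sq_frob_eq_sum_unfoldT, unfoldT_tMul]
  exact sum_sq_mul_le _ _

end Tensor

section Quantile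

theorem List.length_sub_le_countP_getElem_le {α : Type*} [LinearOrder α] {L : List α}
    (hL : L.Pairwise (· ≤ ·)) {k : ℕ} (hk : k < L.length) :
    L.length - k ≤ L.countP (fun x => L[k] ≤ x) := by
  have hdrop : ∀ x ∈ L.drop k, L[k] ≤ x := by
    intro x hx
    obtain ⟨i, hi, rfl⟩ := List.mem_iff_getElem.mp hx
    rw [List.getElem_drop]
    exact hL.rel_get_of_le (a := ⟨k, hk⟩) (b := ⟨k + i, by simp at hi; omega⟩) (by simp)
  rw [← List.length_drop,
    ← (List.countP_eq_length (p := fun x => decide (L[k] ≤ x))).mpr (by simpa using hdrop)]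
  exact (List.drop_sublist k L).countP_le

theorem Multiset.card_sub_le_card_filter_sort_getD_le {α : Type*} [LinearOrder α]
    (s : Multiset α) {k : ℕ} (hk : k < card s) (d : α) :
    card s - k ≤ card (s.filter fun x => (s.sort (· ≤ ·)).getD k d ≤ x) := by
  set L := s.sort (· ≤ ·)
  have hL : (L : Multiset α) = s := sort_eq s _
  have hk' : k < L.length := by rwa [length_sort]
  rw [List.getD_eq_getElem L d hk', ← countP_eq_card_filter, ← hL, coe_card, coe_countP]
  exact List.length_sub_le_countP_getElem_le (pairwise_sort s _) hk'

end Quantile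

section TensorQuantile

variable {a b c : ℕ}

theorem quantile_nonneg (q : ℝ) (E : Tensor a b c) : 0 ≤ quantile q E := by
  unfold quantile
  set L := ((Finset.univ : Finset (Fin a × Fin b × Fin c)).val.map
    (fun t => |E t.1 t.2.1 t.2.2|)).sort (· ≤ ·)
  by_cases hk : ⌊q * ((a * b * c : ℕ) : ℝ)⌋.toNat - 1 < L.length
  · rw [List.getD_eq_getElem L 0 hk]
    obtain ⟨t, -, ht⟩ := Multiset.mem_map.mp ((Multiset.mem_sort _).mp (L.getElem_mem hk))
    exact ht ▸ abs_nonneg _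
  · rw [List.getD_eq_default L 0 (not_lt.mp hk)]

theorem quantile_eq_zero_of_mul_eq_zero (q : ℝ) (E : Tensor a b c) (h : a * b * c = 0) :
    quantile q E = 0 :=
  List.getD_eq_default _ _ (by
    rw [Multiset.length_sort, Multiset.card_map, Finset.card_val, Finset.card_univ]
    simp [← mul_assoc, h])

theorem one_sub_mul_le_card_quantile_le {q : ℝ} (hq0 : 0 ≤ q) (hq1 : q < 1) (E : Tensor a b c) :
    (1 - q) * (a * b * c) ≤
      (#{t : Fin a × Fin b × Fin c | quantile q E ≤ |E t.1 t.2.1 t.2.2|} : ℝ) := by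
  set N := a * b * c
  set k := ⌊q * (N : ℝ)⌋.toNat - 1
  obtain hN | hN := Nat.eq_zero_or_pos N
  · have : (a * b * c : ℝ) = 0 := by exact_mod_cast hN
    rw [this, mul_zero]
    positivity
  have hk : (k : ℝ) ≤ q * N := by
    simp only [k, Int.floor_toNat]
    exact (Nat.cast_le.mpr (Nat.sub_le _ 1)).trans (Nat.floor_le (by positivity))
  have hkN : k < N := by
    have : q * N < N := by nlinarith [(Nat.cast_pos.mpr hN : (0:ℝ) < N)]
    exact_mod_cast hk.trans_lt this
  have hcard := (Finset.univ.val.map fun t : Fin a × Fin b × Fin c => |E t.1 t.2.1 t.2.2|)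
    |>.card_sub_le_card_filter_sort_getD_le (k := k) (by simpa [N, mul_assoc] using hkN) 0
  rw [Multiset.filter_map, Multiset.card_map, Multiset.card_map, Finset.card_val,
    Finset.card_univ] at hcard
  have hS : N - k ≤ #{t : Fin a × Fin b × Fin c | quantile q E ≤ |E t.1 t.2.1 t.2.2|} := by
    convert hcard using 2
    · simp [N, mul_assoc]
    · rfl
  calc (1 - q) * (a * b * c) = (N : ℝ) - q * N := by push_cast [N]; ring
    _ ≤ ((N - k : ℕ) : ℝ) := by rw [Nat.cast_sub hkN.le]; linarith
    _ ≤ _ := by exact_mod_cast hS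

end TensorQuantile

theorem card_sub_card_mul_sq_le_sum_sq {ι : Type*} [Fintype ι] [DecidableEq ι] {e g : ι → ℝ}
    {C : Finset ι} (heg : ∀ t ∉ C, e t = g t) {Q : ℝ} (hQ : 0 ≤ Q) :
    ((#{t | Q ≤ |e t|} : ℝ) - #C) * Q ^ 2 ≤ ∑ t, g t ^ 2 := by
  set S : Finset ι := {t | Q ≤ |e t|}
  have hcard : (#S : ℝ) - #C ≤ #(S \ C) := by
    rw [sub_le_iff_le_add]
    exact_mod_cast Finset.card_le_card_sdiff_add_card
  calc ((#S : ℝ) - #C) * Q ^ 2 ≤ #(S \ C) • Q ^ 2 := by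
        rw [nsmul_eq_mul]
        exact mul_le_mul_of_nonneg_right hcard (sq_nonneg Q)
    _ ≤ ∑ t ∈ S \ C, g t ^ 2 := by
        refine Finset.card_nsmul_le_sum _ _ _ fun t ht => ?_
        obtain ⟨htS, htC⟩ := Finset.mem_sdiff.mp ht
        rw [← heg t htC, ← sq_abs (e t)]
        exact pow_le_pow_left₀ hQ (Finset.mem_filter.mp htS).2 2
    _ ≤ ∑ t, g t ^ 2 := Finset.sum_le_univ_sum_of_nonneg fun t => sq_nonneg _

/-- Bounding the quantile value: if the corruption rate is `β` and
`0 < q < 1 - β`, then the `q`-quantile of the residual `E = A ∗ X - B`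
satisfies `Q_q(E) ≤ σ_max(bcirc A) / √(mpn(1-β-q)) · ‖X - X⋆‖_F`. -/
theorem quantile_bound {m l p n : ℕ} (A : Tensor m l n) (Xstar : Tensor l p n)
    (Bcorr B : Tensor m p n) (hB : B = tMul A Xstar + Bcorr) (β q : ℝ)
    (hβ : ((Finset.univ.filter
        (fun t : Fin m × Fin p × Fin n => Bcorr t.1 t.2.1 t.2.2 ≠ 0)).card : ℝ)
      = β * (m * p * n))
    (hq0 : 0 < q) (hq1 : q < 1 - β) (X : Tensor l p n) :
    quantile q (tMul A X - B) ≤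
      sigmaMax (bcirc A) / Real.sqrt (m * p * n * (1 - β - q)) * frob (X - Xstar) := by
  set E := tMul A X - B
  have hσF : 0 ≤ sigmaMax (bcirc A) * frob (X - Xstar) :=
    mul_nonneg (sigmaMax_nonneg _) (frob_nonneg _)
  obtain hN | hN := Nat.eq_zero_or_pos (m * p * n)
  · rw [quantile_eq_zero_of_mul_eq_zero q E hN, div_mul_eq_mul_div]
    positivity
  set Q := quantile q E
  have hNpos : (0 : ℝ) < m * p * n := by exact_mod_cast hN
  set N : ℝ := m * p * n
  have hβ0 : 0 ≤ β := nonneg_of_mul_nonneg_left (hβ ▸ Nat.cast_nonneg _) hNpos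
  have hcount := one_sub_mul_le_card_quantile_le hq0.le (by linarith) E
  set S : ℝ := ((#{t : Fin m × Fin p × Fin n | Q ≤ |E t.1 t.2.1 t.2.2|} : ℕ) : ℝ)
  have hresidual : ∀ t ∉ Finset.univ.filter
      (fun t : Fin m × Fin p × Fin n => Bcorr t.1 t.2.1 t.2.2 ≠ 0),
      E t.1 t.2.1 t.2.2 = tMul A (X - Xstar) t.1 t.2.1 t.2.2 := by
    intro t ht
    simp only [Finset.mem_filter, Finset.mem_univ, true_and, not_not] at ht
    simp [E, hB, tMul_sub, ht]
  have hclean : (S - β * N) * Q ^ 2 ≤ frob (tMul A (X - Xstar)) ^ 2 := by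
    rw [sq_frob_eq_sum, ← hβ]
    exact card_sub_card_mul_sq_le_sum_sq hresidual (quantile_nonneg q E)
  have hD : 0 < N * (1 - β - q) := mul_pos hNpos (by linarith)
  rw [div_mul_eq_mul_div, le_div_iff₀ (Real.sqrt_pos.mpr hD)]
  refine le_of_sq_le_sq ?_ hσF
  calc (Q * √(N * (1 - β - q))) ^ 2 = N * (1 - β - q) * Q ^ 2 := by
        rw [mul_pow, Real.sq_sqrt hD.le, mul_comm]
    _ ≤ (S - β * N) * Q ^ 2 := by gcongr; linarith
    _ ≤ frob (tMul A (X - Xstar)) ^ 2 := hclean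
    _ ≤ (sigmaMax (bcirc A) * frob (X - Xstar)) ^ 2 :=
        pow_le_pow_left₀ (frob_nonneg _) (frob_tMul_le A (X - Xstar)) 2
end

section
/- (Exact error identity for the masked Kaczmarz update.) Let A ∈ ℝ^{m×l×n}, X⋆ ∈ ℝ^{l×p×n}, B ∈ ℝ^{m×p×n}, and fix a row index i such that M_i M_iᵀ is invertible, where M_i = bcirc(A_{i::}). Let V̂ ⊆ [p] be a set of column indices such that A_{i::}∗(X⋆)_{:V̂:} = B_{i,V̂,:} (the selected columns of B in row i are uncorrupted). Given X ∈ ℝ^{l×p×n}, define the masked update X⁺ by X⁺_{:V̂:} = X_{:V̂:} − A_{i::}^⊤∗(A_{i::}∗A_{i::}^⊤)^{-1}∗(A_{i::}∗X_{:V̂:} − B_{i,V̂,:}) and X⁺_{:j:} = X_{:j:} for j ∉ V̂. Then ‖X⁺ − X⋆‖_F² = ‖X − X⋆‖_F² − ‖P_i((X − X⋆)_{:V̂:})‖_F², where P_i acts on a tensor Y ∈ ℝ^{l×|V̂|×n} by unfold(P_i(Y)) = M_iᵀ(M_iM_iᵀ)^{-1}M_i·unfold(Y). -/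
open scoped BigOperators
open Matrix

/-- The `i`-th horizontal (row) slice of a tensor, as a `1 × b × c` tensor. -/
def rowSlice {a b c : ℕ} (A : Tensor a b c) (i : Fin a) : Tensor 1 b c :=
  fun _ j k => A i j k

/-- The (tensor) Kaczmarz update of `X` at row slice `i`, for the system
`A ∗ X = B`:  `unfold X⁺ = unfold X - Mᵢᵀ (Mᵢ Mᵢᵀ)⁻¹ (Mᵢ · unfold X - unfold Bᵢ)`
where `Mᵢ = bcirc (Aᵢ::)`. -/
noncomputable def kUpdate {m l p n : ℕ} (A : Tensor m l n) (B : Tensor m p n)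
    (X : Tensor l p n) (i : Fin m) : Tensor l p n :=
  fun a j k =>
    X a j k -
      ((bcirc (rowSlice A i))ᵀ * (bcirc (rowSlice A i) * (bcirc (rowSlice A i))ᵀ)⁻¹ *
        (bcirc (rowSlice A i) * unfoldT X - unfoldT (rowSlice B i))) (k, a) j

/-- The masked Kaczmarz update at row `i` with column set `V`: the columns in
`V` undergo the Kaczmarz projection update (which acts column-by-column), and
the remaining columns are left unchanged. -/
noncomputable def maskUpdate {m l p n : ℕ} (A : Tensor m l n) (B : Tensor m p n)
    (X : Tensor l p n) (i : Fin m) (V : Finset (Fin p)) : Tensor l p n :=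
  fun a j k => if j ∈ V then kUpdate A B X i a j k else X a j k


/-- Pythagorean identity for an orthogonal projection matrix. -/
lemma proj_pythagoras {ι : Type*} [Fintype ι] (P : Matrix ι ι ℝ)
    (hsym : Pᵀ = P) (hidem : P * P = P) (v : ι → ℝ) :
    ∑ k, (v k - P.mulVec v k) ^ 2 = ∑ k, (v k) ^ 2 - ∑ k, (P.mulVec v k) ^ 2 := by
  have key : (P.mulVec v) ⬝ᵥ (P.mulVec v) = v ⬝ᵥ (P.mulVec v) := by
    rw [Matrix.dotProduct_mulVec, ← Matrix.mulVec_transpose, hsym,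
      Matrix.mulVec_mulVec, hidem, dotProduct_comm]
  have key' : ∑ k, P.mulVec v k * P.mulVec v k = ∑ k, v k * P.mulVec v k := key
  have h2 : ∑ k, P.mulVec v k ^ 2 = ∑ k, v k * P.mulVec v k := by
    rw [← key']
    exact Finset.sum_congr rfl fun k _ => sq (P.mulVec v k)
  calc ∑ k, (v k - P.mulVec v k) ^ 2
      = ∑ k, ((v k) ^ 2 - 2 * (v k * P.mulVec v k) + P.mulVec v k * P.mulVec v k) :=
        Finset.sum_congr rfl fun k _ => by ring
    _ = ∑ k, (v k) ^ 2 - 2 * ∑ k, v k * P.mulVec v k + ∑ k, P.mulVec v k * P.mulVec v k := by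
        rw [Finset.sum_add_distrib, Finset.sum_sub_distrib, Finset.mul_sum]
    _ = ∑ k, (v k) ^ 2 - ∑ k, (P.mulVec v k) ^ 2 := by
        rw [key', h2]; ring

lemma frob_sq {a b c : ℕ} (X : Tensor a b c) :
    frob X ^ 2 = ∑ i, ∑ j, ∑ k, (X i j k) ^ 2 := by
  apply Real.sq_sqrt
  positivity

/-- Exact error identity for the masked Kaczmarz update: if `Mᵢ Mᵢᵀ` is
invertible and the selected columns of `B` in row `i` are uncorrupted
(`Aᵢ:: ∗ (X⋆)_{:V:} = B_{i,V,:}`), then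
`‖X⁺ - X⋆‖_F² = ‖X - X⋆‖_F² - ‖Pᵢ((X - X⋆)_{:V:})‖_F²`. -/
theorem masked_update_error_identity {m l p n : ℕ} (A : Tensor m l n)
    (B : Tensor m p n) (Xstar X : Tensor l p n) (i : Fin m) (V : Finset (Fin p))
    (hinv : IsUnit (bcirc (rowSlice A i) * (bcirc (rowSlice A i))ᵀ).det)
    (huncorr : ∀ j ∈ V, ∀ kz : Fin n × Fin 1,
      (bcirc (rowSlice A i)).mulVec (fun ka => Xstar ka.2 j ka.1) kz = B i j kz.1) :
    frob (maskUpdate A B X i V - Xstar) ^ 2 =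
      frob (X - Xstar) ^ 2 -
        ∑ j ∈ V, ∑ ka : Fin n × Fin l,
          (((bcirc (rowSlice A i))ᵀ *
              (bcirc (rowSlice A i) * (bcirc (rowSlice A i))ᵀ)⁻¹ *
                bcirc (rowSlice A i)).mulVec
            (fun ka' => (X - Xstar) ka'.2 j ka'.1) ka) ^ 2 := by
  classical
  set M := bcirc (rowSlice A i) with hM
  set N := M * Mᵀ with hN
  set P := Mᵀ * N⁻¹ * M with hPdef
  have hNsym : Nᵀ = N := by rw [hN, Matrix.transpose_mul, Matrix.transpose_transpose]
  have hNinvsym : (N⁻¹)ᵀ = N⁻¹ := by rw [Matrix.transpose_nonsing_inv, hNsym]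
  have hPsym : Pᵀ = P := by
    rw [hPdef, Matrix.transpose_mul, Matrix.transpose_mul, Matrix.transpose_transpose,
      hNinvsym, Matrix.mul_assoc]
  have hPidem : P * P = P := by
    rw [hPdef]
    calc Mᵀ * N⁻¹ * M * (Mᵀ * N⁻¹ * M)
        = Mᵀ * N⁻¹ * (M * Mᵀ) * (N⁻¹ * M) := by
          simp only [Matrix.mul_assoc]
      _ = Mᵀ * (N⁻¹ * N * (N⁻¹ * M)) := by
          rw [← hN]; simp only [Matrix.mul_assoc]
      _ = Mᵀ * N⁻¹ * M := by
          rw [Matrix.nonsing_inv_mul N hinv, Matrix.one_mul, Matrix.mul_assoc]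
  -- column error vectors
  set e : Fin p → (Fin n × Fin l) → ℝ := fun j ka => (X - Xstar) ka.2 j ka.1 with he
  -- per-column identity
  have hcol : ∀ j : Fin p,
      ∑ ka : Fin n × Fin l, ((maskUpdate A B X i V - Xstar) ka.2 j ka.1) ^ 2
        = ∑ ka : Fin n × Fin l, (e j ka) ^ 2
            - (if j ∈ V then ∑ ka : Fin n × Fin l, (P.mulVec (e j) ka) ^ 2 else 0) := by
    intro j
    by_cases hj : j ∈ V
    · have hentry : ∀ ka : Fin n × Fin l,
          (maskUpdate A B X i V - Xstar) ka.2 j ka.1 = e j ka - P.mulVec (e j) ka := by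
        intro ka
        have hQ : (Mᵀ * N⁻¹ * (M * unfoldT X - unfoldT (rowSlice B i))) ka j
            = P.mulVec (e j) ka := by
          have hcolv : (fun s => (M * unfoldT X - unfoldT (rowSlice B i)) s j)
              = M.mulVec (e j) := by
            funext s
            have hb : unfoldT (rowSlice B i) s j = B i j s.1 := rfl
            have hx : (M * unfoldT X) s j = M.mulVec (fun ka => X ka.2 j ka.1) s := by
              simp [Matrix.mul_apply, Matrix.mulVec, dotProduct, unfoldT]
            have hstar := huncorr j hj s
            simp only [Matrix.sub_apply, hx, hb, ← hstar, he]
            simp [Matrix.mulVec, dotProduct, Pi.sub_apply, mul_sub,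
              Finset.sum_sub_distrib]
          have : (Mᵀ * N⁻¹ * (M * unfoldT X - unfoldT (rowSlice B i))) ka j
              = (Mᵀ * N⁻¹).mulVec (fun s => (M * unfoldT X - unfoldT (rowSlice B i)) s j) ka := by
            simp [Matrix.mul_apply, Matrix.mulVec, dotProduct]
          rw [this, hcolv, Matrix.mulVec_mulVec, ← hPdef]
        show maskUpdate A B X i V ka.2 j ka.1 - Xstar ka.2 j ka.1 = _
        rw [maskUpdate, if_pos hj, kUpdate]
        simp only [← hM, ← hN]
        rw [hQ]
        have : e j ka = X ka.2 j ka.1 - Xstar ka.2 j ka.1 := rfl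
        rw [this]; ring
      rw [if_pos hj]
      calc ∑ ka : Fin n × Fin l, ((maskUpdate A B X i V - Xstar) ka.2 j ka.1) ^ 2
          = ∑ ka : Fin n × Fin l, (e j ka - P.mulVec (e j) ka) ^ 2 :=
            Finset.sum_congr rfl fun ka _ => by rw [hentry ka]
        _ = _ := proj_pythagoras P hPsym hPidem (e j)
    · rw [if_neg hj, sub_zero]
      refine Finset.sum_congr rfl fun ka _ => ?_
      have : (maskUpdate A B X i V - Xstar) ka.2 j ka.1 = e j ka := by
        show maskUpdate A B X i V ka.2 j ka.1 - Xstar ka.2 j ka.1 = _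
        rw [maskUpdate, if_neg hj]; rfl
      rw [this]
  -- reorganize the triple sums
  have hreorg : ∀ Y : Tensor l p n,
      (∑ a, ∑ j, ∑ k, (Y a j k) ^ 2)
        = ∑ j, ∑ ka : Fin n × Fin l, (Y ka.2 j ka.1) ^ 2 := by
    intro Y
    rw [Finset.sum_comm]
    refine Finset.sum_congr rfl fun j _ => ?_
    rw [Fintype.sum_prod_type_right]
  rw [frob_sq, frob_sq, hreorg, hreorg]
  rw [Finset.sum_congr rfl fun j _ => hcol j, Finset.sum_sub_distrib]
  congr 1
  rw [Finset.sum_ite_mem, Finset.univ_inter]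
end

section
/- (Block diagonalization of the block-circulant matrix by the DFT.) Let ω = e^{−2πi/n} and let F ∈ ℂ^{n×n} be the normalized discrete Fourier transform matrix with entries F_{jk} = ω^{(j−1)(k−1)}/√n. Then for every tensor A ∈ ℂ^{m×l×n}, the matrix (F ⊗ I_m)·bcirc(A)·(F* ⊗ I_l) is block diagonal with n diagonal blocks of size m×l, and its h-th diagonal block equals Â_{::h} = Σ_{k=1}^{n} ω^{(h−1)(k−1)}·A_{::k}, the h-th frontal slice of the tensor obtained by applying the (unnormalized) DFT along the tube fibers of A. -/
open scoped BigOperators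
open Matrix Kronecker

/-- A complex third-order tensor of size `a × b × c` (zero-indexed). -/
abbrev TensorC (a b c : ℕ) := Fin a → Fin b → Fin c → ℂ

/-- The block-circulant matrix of a complex third-order tensor: the `(r, s)`
block is the frontal slice of index `r - s (mod c)` (zero-indexed). -/
def bcircC {a b c : ℕ} (A : TensorC a b c) :
    Matrix (Fin c × Fin a) (Fin c × Fin b) ℂ :=
  fun ri sj => A ri.2 sj.2 (ri.1 - sj.1)

/-- The primitive root `ω = e^{-2π i/n}`. -/
noncomputable def omegaN (n : ℕ) : ℂ := Complex.exp (-2 * Real.pi * Complex.I / n)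

/-- The normalized discrete Fourier transform matrix, with entries
`F j k = ω^{jk} / √n` (zero-indexed). -/
noncomputable def dftMatrix (n : ℕ) : Matrix (Fin n) (Fin n) ℂ :=
  fun j k => omegaN n ^ ((j : ℕ) * (k : ℕ)) / (Real.sqrt n : ℂ)

/-- The `h`-th frontal slice of the tensor obtained by applying the
(unnormalized) DFT along the tube fibers of `A`:
`Â_{::h} = ∑_k ω^{hk} A_{::k}` (zero-indexed). -/
noncomputable def dftSlice {m l n : ℕ} (A : TensorC m l n) (h : Fin n) :
    Matrix (Fin m) (Fin l) ℂ :=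
  fun i j => ∑ k : Fin n, omegaN n ^ ((h : ℕ) * (k : ℕ)) * A i j k

lemma omegaN_eq_inv (n : ℕ) : omegaN n = (Complex.exp (2 * Real.pi * Complex.I / n))⁻¹ := by
  rw [← Complex.exp_neg]; unfold omegaN; congr 1; ring

lemma omegaN_prim {n : ℕ} (hn : n ≠ 0) : IsPrimitiveRoot (omegaN n) n := by
  rw [omegaN_eq_inv]
  exact (Complex.isPrimitiveRoot_exp n hn).inv

lemma omegaN_pow_n {n : ℕ} (hn : n ≠ 0) : omegaN n ^ n = 1 := (omegaN_prim hn).pow_eq_one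

lemma omegaN_pow_mod {n : ℕ} (hn : n ≠ 0) (a : ℕ) : omegaN n ^ (a % n) = omegaN n ^ a := by
  conv_rhs => rw [← Nat.div_add_mod a n]
  rw [pow_add, pow_mul, omegaN_pow_n hn, one_pow, one_mul]

lemma omegaN_pow_congr {n : ℕ} (hn : n ≠ 0) {a b : ℕ} (h : a ≡ b [MOD n]) :
    omegaN n ^ a = omegaN n ^ b := by
  rw [← omegaN_pow_mod hn a, ← omegaN_pow_mod hn b, h]

lemma star_omegaN {n : ℕ} (hn : n ≠ 0) : star (omegaN n) = omegaN n ^ (n - 1) := by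
  have h0 : star (omegaN n) = Complex.exp (2 * Real.pi * Complex.I / n) := by
    show (starRingEnd ℂ) (Complex.exp (-2 * Real.pi * Complex.I / n)) = _
    rw [← Complex.exp_conj]
    congr 1
    simp [map_div₀, map_ofNat, Complex.conj_I]
  have h1 : star (omegaN n) = (omegaN n)⁻¹ := by rw [h0, omegaN_eq_inv, inv_inv]
  have h2 : omegaN n ^ (n - 1) * omegaN n = 1 := by
    rw [← pow_succ]
    have : n - 1 + 1 = n := by omega
    rw [this, omegaN_pow_n hn]
  rw [h1]
  exact inv_eq_of_mul_eq_one_left h2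

lemma kernel_sum {n : ℕ} (r s k : Fin n) :
    ∑ q : Fin n, dftMatrix n r (k + q) * star (dftMatrix n s q)
      = if r = s then omegaN n ^ ((r : ℕ) * (k : ℕ)) else 0 := by
  have hn : n ≠ 0 := r.pos.ne'
  have hsqrt : ((Real.sqrt n : ℝ) : ℂ) * ((Real.sqrt n : ℝ) : ℂ) = (n : ℂ) := by
    rw [← Complex.ofReal_mul, Real.mul_self_sqrt (Nat.cast_nonneg n)]
    norm_num
  have hterm : ∀ q : Fin n,
      dftMatrix n r (k + q) * star (dftMatrix n s q)
        = omegaN n ^ ((r : ℕ) * (k : ℕ)) / n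
            * (omegaN n ^ ((r : ℕ) + (n - 1) * (s : ℕ))) ^ (q : ℕ) := by
    intro q
    unfold dftMatrix
    rw [star_div₀, star_pow, star_omegaN hn, ← pow_mul,
      show star ((Real.sqrt n : ℝ) : ℂ) = ((Real.sqrt n : ℝ) : ℂ) from Complex.conj_ofReal _]
    have h1 : omegaN n ^ ((r : ℕ) * ((k + q : Fin n) : ℕ))
        = omegaN n ^ ((r : ℕ) * (k : ℕ)) * omegaN n ^ ((r : ℕ) * (q : ℕ)) := by
      rw [← pow_add, Fin.val_add]
      exact omegaN_pow_congr hn (by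
        calc (r : ℕ) * (((k : ℕ) + (q : ℕ)) % n)
            ≡ (r : ℕ) * ((k : ℕ) + (q : ℕ)) [MOD n] := (Nat.mod_modEq _ n).mul_left _
          _ = (r : ℕ) * (k : ℕ) + (r : ℕ) * (q : ℕ) := mul_add _ _ _)
    rw [h1, ← pow_mul,
      show ((r : ℕ) + (n - 1) * (s : ℕ)) * (q : ℕ)
          = (r : ℕ) * (q : ℕ) + (n - 1) * ((s : ℕ) * (q : ℕ)) from by ring,
      pow_add, ← hsqrt]
    ring
  simp only [hterm]
  rw [← Finset.mul_sum, Fin.sum_univ_eq_sum_range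
    (fun i => (omegaN n ^ ((r : ℕ) + (n - 1) * (s : ℕ))) ^ i) n]
  by_cases hrs : r = s
  · subst hrs
    have hexp : (r : ℕ) + (n - 1) * (r : ℕ) = n * (r : ℕ) := by
      have h : n - 1 + 1 = n := by omega
      calc (r : ℕ) + (n - 1) * (r : ℕ) = (n - 1 + 1) * (r : ℕ) := by ring
        _ = n * (r : ℕ) := by rw [h]
    rw [hexp, show omegaN n ^ (n * (r : ℕ)) = 1 from by
      rw [pow_mul, omegaN_pow_n hn, one_pow], if_pos rfl]
    simp only [one_pow, Finset.sum_const, Finset.card_range, nsmul_eq_mul, mul_one]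
    rw [div_mul_cancel₀]
    exact Nat.cast_ne_zero.mpr hn
  · rw [if_neg hrs]
    have hx : omegaN n ^ ((r : ℕ) + (n - 1) * (s : ℕ)) ≠ 1 := by
      intro h
      have hd : n ∣ (r : ℕ) + (n - 1) * (s : ℕ) :=
        ((omegaN_prim hn).pow_eq_one_iff_dvd _).mp h
      have e2 : (r : ℕ) + (n - 1) * (s : ℕ) + (s : ℕ) = (r : ℕ) + n * (s : ℕ) := by
        have h' : n - 1 + 1 = n := by omega
        calc (r : ℕ) + (n - 1) * (s : ℕ) + (s : ℕ)
            = (r : ℕ) + (n - 1 + 1) * (s : ℕ) := by ring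
          _ = (r : ℕ) + n * (s : ℕ) := by rw [h']
      have h0 : n * (s : ℕ) ≡ 0 [MOD n] := Nat.modEq_zero_iff_dvd.mpr ⟨(s : ℕ), rfl⟩
      have hmod : (r : ℕ) ≡ (s : ℕ) [MOD n] := by
        calc (r : ℕ) = (r : ℕ) + 0 := (add_zero _).symm
          _ ≡ (r : ℕ) + n * (s : ℕ) [MOD n] := (Nat.ModEq.add_left _ h0).symm
          _ = (r : ℕ) + (n - 1) * (s : ℕ) + (s : ℕ) := e2.symm
          _ ≡ 0 + (s : ℕ) [MOD n] := Nat.ModEq.add_right _ (Nat.modEq_zero_iff_dvd.mpr hd)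
          _ = (s : ℕ) := zero_add _
      have : (r : ℕ) = (s : ℕ) := by
        have := hmod
        unfold Nat.ModEq at this
        rwa [Nat.mod_eq_of_lt r.isLt, Nat.mod_eq_of_lt s.isLt] at this
      exact hrs (Fin.ext this)
    have hxn : (omegaN n ^ ((r : ℕ) + (n - 1) * (s : ℕ))) ^ n = 1 := by
      rw [← pow_mul, mul_comm, pow_mul, omegaN_pow_n hn, one_pow]
    rw [geom_sum_eq hx n, hxn]
    simp

lemma entry_eq {m l n : ℕ} (A : TensorC m l n) (r s : Fin n) (i : Fin m) (j : Fin l) :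
    ((dftMatrix n ⊗ₖ (1 : Matrix (Fin m) (Fin m) ℂ)) * bcircC A *
        ((dftMatrix n)ᴴ ⊗ₖ (1 : Matrix (Fin l) (Fin l) ℂ))) (r, i) (s, j)
      = if r = s then ∑ k : Fin n, omegaN n ^ ((r : ℕ) * (k : ℕ)) * A i j k else 0 := by
  have hn : n ≠ 0 := r.pos.ne'
  haveI : NeZero n := ⟨hn⟩
  simp only [Matrix.mul_apply, Matrix.kroneckerMap_apply, Matrix.one_apply, bcircC,
    Fintype.sum_prod_type, Matrix.conjTranspose_apply, mul_ite, ite_mul, mul_zero, zero_mul,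
    mul_one, one_mul, Finset.sum_ite_eq', Finset.mem_univ, if_true, Finset.sum_ite_eq,
    Finset.sum_ite_irrel, Finset.sum_const_zero]
  have hre : ∀ q : Fin n, (∑ p : Fin n, dftMatrix n r p * A i j (p - q))
      = ∑ k : Fin n, dftMatrix n r (k + q) * A i j k := by
    intro q
    exact (Fintype.sum_equiv (Equiv.addRight q)
      (fun k => dftMatrix n r (k + q) * A i j k)
      (fun p => dftMatrix n r p * A i j (p - q))
      (fun k => by simp)).symm
  simp only [hre]
  calc ∑ q : Fin n, (∑ k : Fin n, dftMatrix n r (k + q) * A i j k) * star (dftMatrix n s q)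
      = ∑ k : Fin n, (∑ q : Fin n, dftMatrix n r (k + q) * star (dftMatrix n s q))
          * A i j k := by
        simp only [Finset.sum_mul]
        rw [Finset.sum_comm]
        exact Finset.sum_congr rfl fun k _ => Finset.sum_congr rfl fun q _ => by ring
    _ = ∑ k : Fin n, (if r = s then omegaN n ^ ((r : ℕ) * (k : ℕ)) else 0) * A i j k := by
        simp only [kernel_sum]
    _ = _ := by by_cases hrs : r = s <;> simp [hrs]

/-- Block diagonalization of the block-circulant matrix by the DFT:
`(F ⊗ I_m) · bcirc(A) · (F* ⊗ I_l)` is block diagonal, with `h`-th diagonal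
block `Â_{::h} = ∑_k ω^{hk} A_{::k}`. -/
theorem bcirc_block_diagonalization {m l n : ℕ} (A : TensorC m l n) :
    (∀ (r s : Fin n) (i : Fin m) (j : Fin l), r ≠ s →
      ((dftMatrix n ⊗ₖ (1 : Matrix (Fin m) (Fin m) ℂ)) * bcircC A *
        ((dftMatrix n)ᴴ ⊗ₖ (1 : Matrix (Fin l) (Fin l) ℂ))) (r, i) (s, j) = 0) ∧
    (∀ (h : Fin n) (i : Fin m) (j : Fin l),
      ((dftMatrix n ⊗ₖ (1 : Matrix (Fin m) (Fin m) ℂ)) * bcircC A *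
        ((dftMatrix n)ᴴ ⊗ₖ (1 : Matrix (Fin l) (Fin l) ℂ))) (h, i) (h, j) =
          dftSlice A h i j) := by

  constructor
  · intro r s i j hrs
    rw [entry_eq, if_neg hrs]
  · intro h i j
    rw [entry_eq, if_pos rfl]
    rfl
end
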